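/- Let d be an even MPT density with tail index γ, cdf D, and fix p ∈ (0,1) and u > 0. Then the Bayesian false discovery rate of the fixed thresholding procedure, BFDR(ω) = (1−p)(1 − D(ω)) / [(1−p)(1 − D(ω)) + p(1 − D(ω·(1+u)^(−1/2)))], is a strictly decreasing function of ω on [0, ∞) with BFDR(0) = 1 − p, and BFDR(ω) → β* = (1 + (1+u)^(γ/2)·p/(1−p))^(−1) as ω → ∞. In particular, the BFDR of a finite fixed thresholding procedure can only take values in the interval (β*, 1−p]. -/

import Mathlib

/-!
Write `S x = ∫_{(x,∞)} d` and `c = (1 + u) ^ (-1/2) < 1`. Then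
`BFDR ω = (1 + p / (1 - p) * S (ω c) / S ω)⁻¹`, so everything is a statement about the tail
ratio `S (ω c) / S ω`. It equals `1` at `ω = 0`. It is strictly increasing on `[0, ∞)` because
the likelihood ratio `d (x c) / d x` is (monotone likelihood ratios pass to tail integrals). And
the polynomial tail `d x ~ C_d x^(-(γ+1))` integrates to `S x ~ (C_d / γ) x^(-γ)`, so the ratio
tends to `c^(-γ) = (1 + u)^(γ/2)`.
-/

open MeasureTheory Filter

/-- Cumulative distribution function of a density `d` with respect to Lebesgue measure. -/
noncomputable def cdf (d : ℝ → ℝ) (x : ℝ) : ℝ := ∫ t in Set.Iic x, d t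

/-- A monotone polynomial tail (MPT) density with tail index `γ` and tail constant `Cd`:
a probability density function that is even (or supported on the nonnegative half-line),
strictly positive on `(0, ∞)`, satisfies `d x * x ^ (γ + 1) → Cd` as `x → ∞`, and has a
monotone likelihood ratio: for every `θ > 1`, `x ↦ d (x / θ) / d x` is strictly increasing
on `(0, ∞)`. -/
structure IsMPT (d : ℝ → ℝ) (γ Cd : ℝ) : Prop where
  gamma_pos : 0 < γ
  Cd_pos : 0 < Cd
  nonneg : ∀ x, 0 ≤ d x
  integrable : Integrable d
  integral_one : ∫ x, d x = 1
  even_or_halfline : (∀ x, d (-x) = d x) ∨ (∀ x < 0, d x = 0)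
  pos : ∀ x, 0 < x → 0 < d x
  tail : Tendsto (fun x => d x * x ^ (γ + 1)) atTop (nhds Cd)
  mlr : ∀ θ : ℝ, 1 < θ → StrictMonoOn (fun x => d (x / θ) / d x) (Set.Ioi 0)

/-- The Bayesian false discovery rate of the fixed thresholding procedure with threshold `ω`. -/
noncomputable def BFDR (d : ℝ → ℝ) (p u ω : ℝ) : ℝ :=
  (1 - p) * (1 - cdf d ω) /
    ((1 - p) * (1 - cdf d ω) + p * (1 - cdf d (ω * (1 + u) ^ (-(1 : ℝ) / 2))))

open Set Topology

theorem setIntegral_pos_of_forall_pos {X : Type*} [MeasurableSpace X] {μ : Measure X}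
    {f : X → ℝ} {s : Set X} (hs : MeasurableSet s) (hμ : 0 < μ s) (hf : IntegrableOn f s μ)
    (hpos : ∀ x ∈ s, 0 < f x) : 0 < ∫ x in s, f x ∂μ := by
  have hnonneg : 0 ≤ᵐ[μ.restrict s] f :=
    (ae_restrict_iff' hs).2 (ae_of_all _ fun x hx => (hpos x hx).le)
  rw [setIntegral_pos_iff_support_of_nonneg_ae hnonneg hf]
  exact hμ.trans_le (measure_mono fun x hx => ⟨(hpos x hx).ne', hx⟩)

theorem StrictAntiOn.lt_of_tendsto_atTop {α β : Type*} [LinearOrder α] [NoMaxOrder α]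
    [TopologicalSpace β] [LinearOrder β] [OrderClosedTopology β] {f : α → β} {a x : α} {L : β}
    (hf : StrictAntiOn f (Ici a)) (hlim : Tendsto f atTop (𝓝 L)) (hx : a ≤ x) : L < f x := by
  have : Nonempty α := ⟨x⟩
  obtain ⟨y, hxy⟩ := exists_gt x
  have hy : a ≤ y := hx.trans hxy.le
  calc L ≤ f y := le_of_tendsto hlim <|
        (eventually_ge_atTop y).mono fun z hz => hf.antitoneOn hy (hy.trans hz) hz
    _ < f x := hf hx hy hxy

/-- Splitting `(x, ∞) = (x, y] ∪ (y, ∞)`, the ratio `g / f` is at most `r = g y / f y` on the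
first piece and exceeds it on the second. -/
theorem strictMonoOn_setIntegral_Ioi_div {f g : ℝ → ℝ} {a : ℝ} (hf : IntegrableOn f (Ioi a))
    (hg : IntegrableOn g (Ioi a)) (hfpos : ∀ x ∈ Ioi a, 0 < f x)
    (hratio : StrictMonoOn (fun x => g x / f x) (Ioi a)) :
    StrictMonoOn (fun x => (∫ t in Ioi x, g t) / ∫ t in Ioi x, f t) (Ici a) := by
  intro x (hx : a ≤ x) y (hy : a ≤ y) hxy
  have hsub : ∀ z, a ≤ z → Ioi z ⊆ Ioi a := fun z hz => Ioi_subset_Ioi hz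
  have htail_pos : ∀ z, a ≤ z → 0 < ∫ t in Ioi z, f t := fun z hz =>
    setIntegral_pos_of_forall_pos measurableSet_Ioi (by simp [Real.volume_Ioi])
      (hf.mono_set (hsub z hz)) fun t ht => hfpos t (hsub z hz ht)
  have hya : a < y := lt_of_le_of_lt hx hxy
  set r := g y / f y
  have below : ∀ t ∈ Ioc x y, g t ≤ r * f t := fun t ht =>
    have hta : t ∈ Ioi a := lt_of_le_of_lt hx ht.1
    (div_le_iff₀ (hfpos t hta)).1 (hratio.monotoneOn hta hya ht.2)
  have above : ∀ t ∈ Ioi y, r * f t < g t := fun t ht =>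
    have hta : t ∈ Ioi a := hya.trans ht
    (lt_div_iff₀ (hfpos t hta)).1 (hratio hya hta ht)
  have hIoc : Ioc x y ⊆ Ioi a := fun t ht => lt_of_le_of_lt hx ht.1
  have hsplit : ∀ φ : ℝ → ℝ, IntegrableOn φ (Ioi a) →
      ∫ t in Ioi x, φ t = (∫ t in Ioc x y, φ t) + ∫ t in Ioi y, φ t := fun φ hφ => by
    rw [← setIntegral_union (Ioc_disjoint_Ioi le_rfl) measurableSet_Ioi (hφ.mono_set hIoc)
      (hφ.mono_set (hsub y hy)), Ioc_union_Ioi_eq_Ioi hxy.le]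
  have hF₁ : 0 < ∫ t in Ioc x y, f t :=
    setIntegral_pos_of_forall_pos measurableSet_Ioc (by simp [Real.volume_Ioc, hxy])
      (hf.mono_set hIoc) fun t ht => hfpos t (hIoc ht)
  have hG₁ : ∫ t in Ioc x y, g t ≤ r * ∫ t in Ioc x y, f t := by
    rw [← integral_const_mul]
    exact setIntegral_mono_on (hg.mono_set hIoc) ((hf.mono_set hIoc).const_mul r)
      measurableSet_Ioc below
  have hG₂ : r * ∫ t in Ioi y, f t < ∫ t in Ioi y, g t := by
    have hfy := hf.mono_set (hsub y hy)
    have hgy := hg.mono_set (hsub y hy)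
    have := setIntegral_pos_of_forall_pos (f := fun t => g t - r * f t) measurableSet_Ioi
      (by simp [Real.volume_Ioi]) (hgy.sub (hfy.const_mul r)) fun t ht => sub_pos.2 (above t ht)
    rwa [integral_sub hgy (hfy.const_mul r), integral_const_mul, sub_pos] at this
  rw [div_lt_div_iff₀ (htail_pos x hx) (htail_pos y hy), hsplit f hf, hsplit g hg]
  nlinarith [mul_le_mul_of_nonneg_right hG₁ (htail_pos y hy).le, mul_lt_mul_of_pos_left hG₂ hF₁]

theorem tendsto_setIntegral_Ioi_mul_rpow {d : ℝ → ℝ} {γ C : ℝ} (hγ : 0 < γ)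
    (hd : IntegrableOn d (Ioi 0)) (htail : Tendsto (fun x => d x * x ^ (γ + 1)) atTop (𝓝 C)) :
    Tendsto (fun x => (∫ t in Ioi x, d t) * x ^ γ) atTop (𝓝 (C / γ)) := by
  refine Metric.tendsto_atTop.2 fun ε hε => ?_
  obtain ⟨N, hN⟩ := Metric.tendsto_atTop.1 htail (ε * γ / 2) (by positivity)
  refine ⟨max N 1, fun x hx => ?_⟩
  have hx₀ : 0 < x := zero_lt_one.trans_le ((le_max_right N 1).trans hx)
  have hexp : -(γ + 1) < -1 := by linarith
  have hint : IntegrableOn (fun t : ℝ => t ^ (-(γ + 1))) (Ioi x) :=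
    integrableOn_Ioi_rpow_of_lt hexp hx₀
  have hpow : ∫ t in Ioi x, t ^ (-(γ + 1)) = x ^ (-γ) / γ := by
    rw [integral_Ioi_rpow_of_lt hexp hx₀, show -(γ + 1) + 1 = -γ by ring, neg_div_neg_eq]
  have hcancel : x ^ (-γ) * x ^ γ = 1 := by
    rw [← Real.rpow_add hx₀, neg_add_cancel, Real.rpow_zero]
  have hdx : IntegrableOn d (Ioi x) := hd.mono_set (Ioi_subset_Ioi hx₀.le)
  have hdiff : (∫ t in Ioi x, d t) * x ^ γ - C / γ =
      (∫ t in Ioi x, (d t - C * t ^ (-(γ + 1)))) * x ^ γ := by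
    rw [integral_sub hdx (hint.const_mul C), integral_const_mul, hpow, sub_mul, mul_assoc,
      div_mul_eq_mul_div, hcancel, mul_one_div]
  have hpointwise : ∀ t ∈ Ioi x, ‖d t - C * t ^ (-(γ + 1))‖ ≤ ε * γ / 2 * t ^ (-(γ + 1)) := by
    intro t (ht : x < t)
    have ht₀ : 0 < t := hx₀.trans ht
    have hfactor : d t - C * t ^ (-(γ + 1)) = (d t * t ^ (γ + 1) - C) * t ^ (-(γ + 1)) := by
      rw [sub_mul, mul_assoc, ← Real.rpow_add ht₀, add_neg_cancel, Real.rpow_zero, mul_one]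
    rw [Real.norm_eq_abs, hfactor, abs_mul, abs_of_pos (Real.rpow_pos_of_pos ht₀ _)]
    refine mul_le_mul_of_nonneg_right ?_ (Real.rpow_pos_of_pos ht₀ _).le
    rw [← Real.dist_eq]
    exact (hN t ((le_max_left N 1).trans (hx.trans ht.le))).le
  have hbound := norm_integral_le_of_norm_le (hint.const_mul (ε * γ / 2))
    ((ae_restrict_iff' measurableSet_Ioi).2 (ae_of_all _ hpointwise))
  rw [integral_const_mul, hpow, Real.norm_eq_abs] at hbound
  rw [Real.dist_eq, hdiff, abs_mul, abs_of_pos (Real.rpow_pos_of_pos hx₀ γ)]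
  calc _ ≤ ε * γ / 2 * (x ^ (-γ) / γ) * x ^ γ :=
        mul_le_mul_of_nonneg_right hbound (Real.rpow_pos_of_pos hx₀ γ).le
    _ = ε / 2 := by
      rw [mul_assoc, div_mul_eq_mul_div (x ^ (-γ)), hcancel]
      field_simp
    _ < ε := half_lt_self hε

theorem tendsto_comp_mul_div_of_tendsto_mul_rpow {f : ℝ → ℝ} {γ L c : ℝ} (hL : L ≠ 0)
    (hc : 0 < c) (hf : Tendsto (fun x => f x * x ^ γ) atTop (𝓝 L)) :
    Tendsto (fun x => f (x * c) / f x) atTop (𝓝 (c ^ (-γ))) := by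
  have hquot := ((hf.comp (tendsto_id.atTop_mul_const hc)).div hf hL).mul_const (c ^ (-γ))
  rw [div_self hL, one_mul] at hquot
  refine hquot.congr' ?_
  filter_upwards [eventually_gt_atTop 0] with x hx
  simp only [Pi.div_apply, Function.comp_apply, id]
  rw [Real.mul_rpow hx.le hc.le, mul_div_mul_comm,
    mul_div_cancel_left₀ _ (Real.rpow_pos_of_pos hx γ).ne', mul_assoc, ← Real.rpow_add hc,
    add_neg_cancel, Real.rpow_zero, mul_one]

theorem one_sub_cdf_eq_setIntegral_Ioi {d : ℝ → ℝ} (hd : Integrable d) (h1 : ∫ x, d x = 1)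
    (x : ℝ) : 1 - cdf d x = ∫ t in Ioi x, d t := by
  rw [← h1, cdf, ← intervalIntegral.integral_Iic_add_Ioi hd.integrableOn hd.integrableOn,
    add_sub_cancel_left]

noncomputable def tailRatio (d : ℝ → ℝ) (c x : ℝ) : ℝ :=
  (∫ t in Ioi (x * c), d t) / ∫ t in Ioi x, d t

namespace IsMPT

variable {d : ℝ → ℝ} {γ Cd : ℝ}

theorem setIntegral_Ioi_pos (h : IsMPT d γ Cd) (x : ℝ) : 0 < ∫ t in Ioi x, d t := by
  rw [setIntegral_pos_iff_support_of_nonneg_ae (ae_of_all _ h.nonneg) h.integrable.integrableOn]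
  calc (0 : ENNReal) < volume (Ioi (max x 0)) := by simp [Real.volume_Ioi]
    _ ≤ volume (Function.support d ∩ Ioi x) := measure_mono fun t (ht : max x 0 < t) =>
      ⟨(h.pos t ((le_max_right x 0).trans_lt ht)).ne', (le_max_left x 0).trans_lt ht⟩

theorem tailRatio_pos (h : IsMPT d γ Cd) (c x : ℝ) : 0 < tailRatio d c x :=
  div_pos (h.setIntegral_Ioi_pos _) (h.setIntegral_Ioi_pos x)

theorem tailRatio_zero (h : IsMPT d γ Cd) (c : ℝ) : tailRatio d c 0 = 1 := by
  rw [tailRatio, zero_mul, div_self (h.setIntegral_Ioi_pos 0).ne']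

theorem strictMonoOn_tailRatio (h : IsMPT d γ Cd) {c : ℝ} (hc₀ : 0 < c) (hc₁ : c < 1) :
    StrictMonoOn (tailRatio d c) (Ici 0) := by
  have hmlr := h.mlr c⁻¹ ((one_lt_inv₀ hc₀).2 hc₁)
  simp only [div_inv_eq_mul] at hmlr
  have hmono := strictMonoOn_setIntegral_Ioi_div h.integrable.integrableOn
    (h.integrable.comp_mul_right' hc₀.ne').integrableOn h.pos hmlr
  have hscale : ∀ x, ∫ t in Ioi (x * c), d t = c * ∫ t in Ioi x, d (t * c) := fun x => by
    rw [← integral_comp_mul_right_Ioi' d x hc₀, smul_eq_mul]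
  intro x hx y hy hxy
  simp only [tailRatio, hscale, mul_div_assoc]
  exact mul_lt_mul_of_pos_left (hmono hx hy hxy) hc₀

theorem tendsto_tailRatio (h : IsMPT d γ Cd) {c : ℝ} (hc : 0 < c) :
    Tendsto (tailRatio d c) atTop (𝓝 (c ^ (-γ))) :=
  tendsto_comp_mul_div_of_tendsto_mul_rpow (div_pos h.Cd_pos h.gamma_pos).ne' hc
    (tendsto_setIntegral_Ioi_mul_rpow h.gamma_pos h.integrable.integrableOn h.tail)

theorem BFDR_eq (h : IsMPT d γ Cd) {p : ℝ} (hp : p ≠ 1) (u ω : ℝ) :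
    BFDR d p u ω = (1 + p / (1 - p) * tailRatio d ((1 + u) ^ (-(1 : ℝ) / 2)) ω)⁻¹ := by
  have ha : (1 - p) * ∫ t in Ioi ω, d t ≠ 0 :=
    mul_ne_zero (sub_ne_zero.2 hp.symm) (h.setIntegral_Ioi_pos ω).ne'
  rw [BFDR, one_sub_cdf_eq_setIntegral_Ioi h.integrable h.integral_one,
    one_sub_cdf_eq_setIntegral_Ioi h.integrable h.integral_one, tailRatio, ← mul_div_mul_comm,
    one_add_div ha, inv_div]

theorem BFDR_zero (h : IsMPT d γ Cd) {p : ℝ} (hp : p ≠ 1) (u : ℝ) : BFDR d p u 0 = 1 - p := by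
  rw [h.BFDR_eq hp, h.tailRatio_zero, mul_one, one_add_div (sub_ne_zero.2 hp.symm),
    sub_add_cancel, one_div, inv_inv]

theorem strictAntiOn_BFDR (h : IsMPT d γ Cd) {p u : ℝ} (hp₀ : 0 < p) (hp₁ : p < 1)
    (hu : 0 < u) : StrictAntiOn (BFDR d p u) (Ici 0) := by
  have hc₀ : 0 < (1 + u) ^ (-(1 : ℝ) / 2) := by positivity
  have hc₁ : (1 + u) ^ (-(1 : ℝ) / 2) < 1 :=
    Real.rpow_lt_one_of_one_lt_of_neg (by linarith) (by norm_num)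
  have hq : 0 < p / (1 - p) := div_pos hp₀ (sub_pos.2 hp₁)
  intro a ha b hb hab
  have hratio := h.strictMonoOn_tailRatio hc₀ hc₁ ha hb hab
  have hpos := h.tailRatio_pos ((1 + u) ^ (-(1 : ℝ) / 2)) a
  rw [h.BFDR_eq hp₁.ne, h.BFDR_eq hp₁.ne]
  exact inv_strictAnti₀ (by positivity) (by gcongr)

theorem tendsto_BFDR (h : IsMPT d γ Cd) {p u : ℝ} (hp₀ : 0 ≤ p) (hp₁ : p < 1) (hu : 0 < 1 + u) :
    Tendsto (BFDR d p u) atTop (𝓝 (1 + (1 + u) ^ (γ / 2) * p / (1 - p))⁻¹) := by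
  have hlim := h.tendsto_tailRatio (Real.rpow_pos_of_pos hu (-(1 : ℝ) / 2))
  rw [← Real.rpow_mul hu.le, show -(1 : ℝ) / 2 * -γ = γ / 2 by ring] at hlim
  have hq : 0 ≤ p / (1 - p) := div_nonneg hp₀ (sub_pos.2 hp₁).le
  rw [funext (h.BFDR_eq hp₁.ne u), mul_div_assoc, mul_comm]
  exact ((hlim.const_mul _).const_add 1).inv₀ (by positivity)

end IsMPT

theorem BFDR_strictAnti_and_range_general (d : ℝ → ℝ) (γ Cd : ℝ) (h : IsMPT d γ Cd)
    (p u : ℝ) (hp : p ∈ Set.Ioo (0 : ℝ) 1) (hu : 0 < u) :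
    StrictAntiOn (fun ω => BFDR d p u ω) (Set.Ici 0) ∧
    BFDR d p u 0 = 1 - p ∧
    Tendsto (fun ω => BFDR d p u ω) atTop
      (nhds (1 + (1 + u) ^ (γ / 2) * p / (1 - p))⁻¹) ∧
    ∀ ω ≥ 0, BFDR d p u ω ∈ Set.Ioc (1 + (1 + u) ^ (γ / 2) * p / (1 - p))⁻¹ (1 - p) := by
  obtain ⟨hp₀, hp₁⟩ := hp
  have hanti := h.strictAntiOn_BFDR hp₀ hp₁ hu
  have hzero := h.BFDR_zero hp₁.ne u
  have hlim := h.tendsto_BFDR hp₀.le hp₁ (by linarith : 0 < 1 + u)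
  refine ⟨hanti, hzero, hlim, fun ω hω => ⟨hanti.lt_of_tendsto_atTop hlim hω, ?_⟩⟩
  exact hzero ▸ hanti.antitoneOn self_mem_Ici hω hω

/-- For an even MPT density, the BFDR of a fixed thresholding procedure is strictly decreasing
in the threshold `ω` on `[0, ∞)`, equals `1 - p` at `ω = 0`, and tends to
`β* = (1 + (1 + u) ^ (γ/2) * p / (1 - p))⁻¹` as `ω → ∞`; in particular it only takes values in
the interval `(β*, 1 - p]`. -/
theorem BFDR_strictAnti_and_range (d : ℝ → ℝ) (γ Cd : ℝ) (h : IsMPT d γ Cd)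
    (heven : ∀ x, d (-x) = d x)
    (p u : ℝ) (hp : p ∈ Set.Ioo (0 : ℝ) 1) (hu : 0 < u) :
    StrictAntiOn (fun ω => BFDR d p u ω) (Set.Ici 0) ∧
    BFDR d p u 0 = 1 - p ∧
    Tendsto (fun ω => BFDR d p u ω) atTop
      (nhds (1 + (1 + u) ^ (γ / 2) * p / (1 - p))⁻¹) ∧
    ∀ ω ≥ 0, BFDR d p u ω ∈ Set.Ioc (1 + (1 + u) ^ (γ / 2) * p / (1 - p))⁻¹ (1 - p) :=
  BFDR_strictAnti_and_range_general d γ Cd h p u hp hu
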